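/- arXiv:1401.6607 — 7 statements merged into one kernel-verified Lean document; each statement's English description precedes it below -/
import Mathlib

section
/- Assume B : 𝒲 → 𝒴 is a bijective continuous linear map and F is Lipschitz continuous. Then the set Y := (B*)⁻¹(dom F*) is bounded, where B* is the adjoint of B and dom F* := {u ∈ 𝒲 : sup_{w∈𝒲}(⟨u, w⟩ − F(w)) < ∞}. Moreover, for any z = (w, x, y) with w ∈ 𝒲, x ∈ X, y ∈ 𝒴 and any ε ≥ 0, if ḡ_Y(z) ≤ ε, then the pair (w̃, x) with w̃ := B⁻¹(Kx + b) is an ε-solution of AECCO, i.e. G(x) + F(w̃) − f* ≤ ε and Bw̃ − Kx − b = 0. -/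
/-!
On `Y = (B*)⁻¹(dom F*)` the gap function is a supremum of affine functions of `ỹ`, so it suffices
to exhibit one good `ỹ ∈ Y`. A subgradient `u` of `F` at `w̃` lies in `dom F*`, and since `B*` is
onto (as `B` is injective) we may take `B* ỹ = u`; then `⟪ỹ, Bw - Kx - b⟫ = ⟪u, w - w̃⟫`, and the
subgradient inequality turns `ḡ_Y(z) ≤ ε` into `G(x) + F(w̃) - f* ≤ ε`, the saddle point being
feasible. Boundedness of `Y`: a `c`-Lipschitz `F` has `dom F*` inside the ball of radius `c`, and
`B*` is injective (as `B` is onto), hence antilipschitz in finite dimension.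
-/

open RealInnerProductSpace Set

theorem ConvexOn.exists_subgradient {E : Type*} [AddCommGroup E] [Module ℝ E] [TopologicalSpace E]
    [IsTopologicalAddGroup E] [ContinuousSMul ℝ E] [LocallyConvexSpace ℝ E]
    {F : E → ℝ} (hF : ConvexOn ℝ univ F) (hc : Continuous F) (p : E) :
    ∃ g : StrongDual ℝ E, ∀ v, F p + g (v - p) ≤ F v := by
  -- separate `(p, F p)` from the open convex strict epigraph of `F`
  have hopen : IsOpen {q : E × ℝ | q.1 ∈ univ ∧ F q.1 < q.2} :=
    (isOpen_univ.preimage continuous_fst).inter (isOpen_lt (hc.comp continuous_fst) continuous_snd)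
  obtain ⟨f, hf⟩ := geometric_hahn_banach_open_point (x := (p, F p)) hF.convex_strict_epigraph
    hopen fun h => lt_irrefl (F p) h.2
  set φ := f.comp (ContinuousLinearMap.inl ℝ E ℝ)
  set α := f (0, 1)
  have hf_apply : ∀ v t, f (v, t) = φ v + t * α := fun v t => by
    have hvt : ((v, t) : E × ℝ) = (v, 0) + t • (0, 1) := by simp
    rw [hvt, map_add, map_smul, smul_eq_mul, mul_comm]
    rfl
  have hsep : ∀ v s, 0 < s → φ v + (F v + s) * α < φ p + F p * α := fun v s hs => by
    simpa [hf_apply] using hf (v, F v + s) (by simpa using hs)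
  have hα : α < 0 := by linarith [hsep p 1 one_pos]
  have hkey : ∀ v, φ v + F v * α ≤ φ p + F p * α := fun v =>
    le_of_forall_pos_lt_add fun ε hε => by
      have := hsep v (ε / -α) (div_pos hε (neg_pos.2 hα))
      rw [add_mul, div_mul_eq_mul_div, div_neg, mul_div_cancel_right₀ _ hα.ne] at this
      linarith
  refine ⟨(-α)⁻¹ • φ, fun v => ?_⟩
  have := hkey v
  rw [smul_apply, map_sub, smul_eq_mul, ← le_sub_iff_add_le',
    inv_mul_le_iff₀ (neg_pos.2 hα)]
  linarith

section ConjugateDomain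

variable {E : Type*} [NormedAddCommGroup E] [InnerProductSpace ℝ E]

/-- `dom F*`, the effective domain of the convex conjugate of `F`. -/
def conjugateDomain (F : E → ℝ) : Set E :=
  {u | BddAbove (range fun w => ⟪u, w⟫ - F w)}

theorem mem_conjugateDomain_of_subgradient {F : E → ℝ} {p u : E}
    (hu : ∀ v, F p + ⟪u, v - p⟫ ≤ F v) : u ∈ conjugateDomain F := by
  refine ⟨⟪u, p⟫ - F p, ?_⟩
  rintro _ ⟨v, rfl⟩
  have := hu v
  rw [inner_sub_right] at this
  dsimp only
  linarith

theorem LipschitzWith.conjugateDomain_subset_closedBall {F : E → ℝ} {c : NNReal}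
    (hF : LipschitzWith c F) : conjugateDomain F ⊆ Metric.closedBall 0 c := by
  rintro u ⟨M, hM⟩
  rw [Metric.mem_closedBall, dist_zero_right]
  by_contra! hlt
  have hrate : 0 < ‖u‖ * (‖u‖ - c) := mul_pos (c.coe_nonneg.trans_lt hlt) (sub_pos.2 hlt)
  -- along the ray `t • u`, the function `⟪u, w⟫ - F w` grows at least at this rate
  have hgrowth : ∀ t : ℝ, 0 ≤ t → t * (‖u‖ * (‖u‖ - c)) ≤ M + F 0 := fun t ht => by
    have hM' : ⟪u, t • u⟫ - F (t • u) ≤ M := hM ⟨t • u, rfl⟩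
    have hLip : F (t • u) - F 0 ≤ c * (t * ‖u‖) := by
      have := (le_abs_self _).trans (hF.dist_le_mul (t • u) 0)
      rwa [dist_zero_right, norm_smul, Real.norm_of_nonneg ht] at this
    rw [real_inner_smul_right, real_inner_self_eq_norm_sq] at hM'
    nlinarith
  have hM0 : 0 ≤ M + F 0 := by simpa using hgrowth 0 le_rfl
  have := hgrowth ((M + F 0 + 1) / (‖u‖ * (‖u‖ - c))) (by positivity)
  rw [div_mul_cancel₀ _ hrate.ne'] at this
  linarith

end ConjugateDomain

theorem eq_zero_of_forall_inner_le_inner {E : Type*} [NormedAddCommGroup E] [InnerProductSpace ℝ E]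
    {y₀ r : E} (h : ∀ y, ⟪y₀, r⟫ ≤ ⟪y, r⟫) : r = 0 := by
  have := h (y₀ - r)
  rw [inner_sub_left, real_inner_self_eq_norm_sq] at this
  exact norm_eq_zero.mp (by nlinarith [norm_nonneg r])

namespace ContinuousLinearMap

variable {𝕜 E F : Type*} [RCLike 𝕜] [NormedAddCommGroup E] [NormedAddCommGroup F]
  [InnerProductSpace 𝕜 E] [InnerProductSpace 𝕜 F] [CompleteSpace E] [CompleteSpace F]
  {T : E →L[𝕜] F}

theorem adjoint_injective_of_surjective (hT : Function.Surjective T) :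
    Function.Injective (adjoint T) := by
  have hker : (adjoint T).ker = ⊥ := by
    rw [← T.orthogonal_range, LinearMap.range_eq_top.2 hT, Submodule.top_orthogonal_eq_bot]
  exact LinearMap.ker_eq_bot.1 hker

theorem adjoint_surjective_of_injective [FiniteDimensional 𝕜 E] (hT : Function.Injective T) :
    Function.Surjective (adjoint T) := by
  have hrange := T.orthogonal_ker
  rw [LinearMap.ker_eq_bot.2 hT, Submodule.bot_orthogonal_eq_top,
    (adjoint T).range.closed_of_finiteDimensional.submodule_topologicalClosure_eq] at hrange
  exact LinearMap.range_eq_top.1 hrange.symm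

end ContinuousLinearMap

theorem stmt_3_general
    {𝒲 𝒳 𝒴 : Type*}
    [NormedAddCommGroup 𝒲] [InnerProductSpace ℝ 𝒲] [FiniteDimensional ℝ 𝒲]
    [NormedAddCommGroup 𝒳] [InnerProductSpace ℝ 𝒳]
    [NormedAddCommGroup 𝒴] [InnerProductSpace ℝ 𝒴] [FiniteDimensional ℝ 𝒴]
    (G : 𝒳 → ℝ)
    (F : 𝒲 → ℝ) (hFconv : ConvexOn ℝ Set.univ F)
    (K : 𝒳 →L[ℝ] 𝒴) (B : 𝒲 →L[ℝ] 𝒴) (b : 𝒴)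
    (ws : 𝒲) (xs : 𝒳) (ys : 𝒴)
    (hsaddle₁ : ∀ yv : 𝒴,
      G xs + F ws - ⟪yv, B ws - K xs - b⟫ ≤ G xs + F ws - ⟪ys, B ws - K xs - b⟫)
    (hB : Function.Bijective B)
    (c : NNReal) (hFlip : LipschitzWith c F)
    (ε : ℝ)
    (w : 𝒲) (x : 𝒳) (y : 𝒴)
    (wtil : 𝒲) (hwtil : B wtil = K x + b) :
    Bornology.IsBounded (ContinuousLinearMap.adjoint B ⁻¹' {yv : 𝒲 | BddAbove (Set.range fun wv => ⟪yv, wv⟫ - F wv)}) ∧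
    ((⨆ ytil ∈ ContinuousLinearMap.adjoint B ⁻¹' {yv : 𝒲 | BddAbove (Set.range fun wv => ⟪yv, wv⟫ - F wv)},
        (((G x + F w - ⟪ytil, B w - K x - b⟫)
          - (G xs + F ws - ⟪y, B ws - K xs - b⟫) : ℝ) : EReal)) ≤ (ε : EReal) →
      G x + F wtil - (G xs + F ws) ≤ ε ∧ B wtil - K x - b = 0) := by
  refine ⟨?_, fun hgap => ?_⟩
  · obtain ⟨k, -, hk⟩ := (ContinuousLinearMap.adjoint B : 𝒴 →ₗ[ℝ] 𝒲).injective_iff_antilipschitz.1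
      (ContinuousLinearMap.adjoint_injective_of_surjective hB.2)
    exact hk.isBounded_preimage (Metric.isBounded_closedBall.subset
      hFlip.conjugateDomain_subset_closedBall)
  have hfeas : B ws - K xs - b = 0 :=
    eq_zero_of_forall_inner_le_inner fun yv => by linarith [hsaddle₁ yv]
  obtain ⟨g, hg⟩ := hFconv.exists_subgradient hFlip.continuous wtil
  set u := (InnerProductSpace.toDual ℝ 𝒲).symm g
  have hu : ∀ v, F wtil + ⟪u, v - wtil⟫ ≤ F v := by
    simpa only [u, InnerProductSpace.toDual_symm_apply] using hg
  obtain ⟨ytil, hytil⟩ := ContinuousLinearMap.adjoint_surjective_of_injective hB.1 u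
  have hmem : ytil ∈ ContinuousLinearMap.adjoint B ⁻¹' conjugateDomain F := by
    rw [mem_preimage, hytil]
    exact mem_conjugateDomain_of_subgradient hu
  have hgap_ytil := EReal.coe_le_coe_iff.1 ((le_iSup₂_of_le ytil hmem le_rfl).trans hgap)
  have hpair : ⟪ytil, B w - K x - b⟫ = ⟪u, w - wtil⟫ := by
    rw [sub_sub, ← hwtil, ← map_sub, ← ContinuousLinearMap.adjoint_inner_left, hytil]
  rw [hfeas, inner_zero_right, hpair] at hgap_ytil
  exact ⟨by linarith [hu w], by rw [hwtil]; abel⟩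

theorem stmt_3
    {𝒲 𝒳 𝒴 : Type*}
    [NormedAddCommGroup 𝒲] [InnerProductSpace ℝ 𝒲] [FiniteDimensional ℝ 𝒲]
    [NormedAddCommGroup 𝒳] [InnerProductSpace ℝ 𝒳] [FiniteDimensional ℝ 𝒳]
    [NormedAddCommGroup 𝒴] [InnerProductSpace ℝ 𝒴] [FiniteDimensional ℝ 𝒴]
    (X : Set 𝒳) (hXclosed : IsClosed X) (hXconv : Convex ℝ X)
    (G : 𝒳 → ℝ) (G' : 𝒳 → 𝒳) (hGgrad : ∀ p, HasGradientAt G (G' p) p)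
    (hGconv : ConvexOn ℝ Set.univ G)
    (L_G : ℝ) (hLG : 0 < L_G)
    (hGsmooth : ∀ x₁ ∈ X, ∀ x₂ ∈ X,
      G x₂ - G x₁ - ⟪G' x₁, x₂ - x₁⟫ ≤ L_G / 2 * ‖x₂ - x₁‖ ^ 2)
    (F : 𝒲 → ℝ) (hFconv : ConvexOn ℝ Set.univ F) (hFlsc : LowerSemicontinuous F)
    (K : 𝒳 →L[ℝ] 𝒴) (B : 𝒲 →L[ℝ] 𝒴) (b : 𝒴)
    (ws : 𝒲) (xs : 𝒳) (ys : 𝒴) (hxs : xs ∈ X)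
    (hsaddle₁ : ∀ yv : 𝒴,
      G xs + F ws - ⟪yv, B ws - K xs - b⟫ ≤ G xs + F ws - ⟪ys, B ws - K xs - b⟫)
    (hsaddle₂ : ∀ wv : 𝒲, ∀ xv ∈ X,
      G xs + F ws - ⟪ys, B ws - K xs - b⟫ ≤ G xv + F wv - ⟪ys, B wv - K xv - b⟫)
    (hB : Function.Bijective B)
    (c : NNReal) (hFlip : LipschitzWith c F)
    (ε : ℝ) (hε : 0 ≤ ε)
    (w : 𝒲) (x : 𝒳) (y : 𝒴) (hx : x ∈ X)
    (wtil : 𝒲) (hwtil : B wtil = K x + b) :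
    Bornology.IsBounded (ContinuousLinearMap.adjoint B ⁻¹' {yv : 𝒲 | BddAbove (Set.range fun wv => ⟪yv, wv⟫ - F wv)}) ∧
    ((⨆ ytil ∈ ContinuousLinearMap.adjoint B ⁻¹' {yv : 𝒲 | BddAbove (Set.range fun wv => ⟪yv, wv⟫ - F wv)},
        (((G x + F w - ⟪ytil, B w - K x - b⟫)
          - (G xs + F ws - ⟪y, B ws - K xs - b⟫) : ℝ) : EReal)) ≤ (ε : EReal) →
      G x + F wtil - (G xs + F ws) ≤ ε ∧ B wtil - K x - b = 0) :=
  stmt_3_general G F hFconv K B b ws xs ys hsaddle₁ hB c hFlip ε w x y wtil hwtil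
end

section
/- Let α ∈ [0,1], let x^ag, x_t, x_{t+1} ∈ X, and set x^md := (1−α)x^ag + αx_t and x⁺ := (1−α)x^ag + αx_{t+1}. Then for every x ∈ X, G(x⁺) ≤ (1−α)G(x^ag) + αG(x) + α⟨∇G(x^md), x_{t+1} − x⟩ + (L_G α²/2)‖x_{t+1} − x_t‖². -/
open RealInnerProductSpace

/-!
The smoothness bound at `x^md` gives `G x⁺ ≤ ℓ x⁺ + (L_G/2)‖x⁺ - x^md‖²`, where
`ℓ y = G x^md + ⟪∇G x^md, y - x^md⟫` is the linearization of `G` at `x^md`. Since `ℓ` is affine and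
`x⁺ - x^md = α (x_{t+1} - x_t)`, `ℓ x⁺` splits as `(1 - α) ℓ x^ag + α ℓ x + α ⟪∇G x^md, x_{t+1} - x⟫`,
and convexity gives `ℓ ≤ G`.
-/

theorem ConvexOn.add_fderiv_sub_le {E : Type*} [NormedAddCommGroup E] [NormedSpace ℝ E]
    {s : Set E} {f : E → ℝ} {f' : E →L[ℝ] ℝ} {x y : E} (hf : ConvexOn ℝ s f)
    (hx : x ∈ s) (hy : y ∈ s) (hf' : HasFDerivAt f f' x) :
    f x + f' (y - x) ≤ f y := by
  let φ : ℝ → ℝ := f ∘ AffineMap.lineMap x y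
  have hφ : ConvexOn ℝ (AffineMap.lineMap x y ⁻¹' s) φ := hf.comp_affineMap _
  have hφ' : HasDerivAt φ (f' (y - x)) 0 := by
    refine HasFDerivAt.comp_hasDerivAt (x := (0 : ℝ)) ?_ AffineMap.hasDerivAt_lineMap
    simpa using hf'
  have := hφ.le_slope_of_hasDerivAt (by simpa using hx) (by simpa using hy) one_pos hφ'
  simp only [φ, slope, Function.comp_apply, AffineMap.lineMap_apply_zero,
    AffineMap.lineMap_apply_one, sub_zero, inv_one, smul_eq_mul, one_mul, vsub_eq_sub] at this
  linarith

theorem ConvexOn.add_inner_gradient_sub_le {E : Type*} [NormedAddCommGroup E]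
    [InnerProductSpace ℝ E] [CompleteSpace E] {s : Set E} {f : E → ℝ} {g x y : E}
    (hf : ConvexOn ℝ s f) (hx : x ∈ s) (hy : y ∈ s) (hg : HasGradientAt f g x) :
    f x + ⟪g, y - x⟫ ≤ f y := by
  simpa using hf.add_fderiv_sub_le hx hy hg.hasFDerivAt

theorem stmt_4_general
    {𝒳 : Type*}
    [NormedAddCommGroup 𝒳] [InnerProductSpace ℝ 𝒳] [FiniteDimensional ℝ 𝒳]
    (X : Set 𝒳) (hXconv : Convex ℝ X)
    (G : 𝒳 → ℝ) (G' : 𝒳 → 𝒳) (hGgrad : ∀ p, HasGradientAt G (G' p) p)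
    (hGconv : ConvexOn ℝ Set.univ G)
    (L_G : ℝ)
    (hGsmooth : ∀ x₁ ∈ X, ∀ x₂ ∈ X,
      G x₂ - G x₁ - ⟪G' x₁, x₂ - x₁⟫ ≤ L_G / 2 * ‖x₂ - x₁‖ ^ 2)
    (a : ℝ) (ha0 : 0 ≤ a) (ha1 : a ≤ 1)
    (xag xt xtp : 𝒳) (hxag : xag ∈ X) (hxt : xt ∈ X) (hxtp : xtp ∈ X)
    (xmd xplus : 𝒳)
    (hxmd : xmd = (1 - a) • xag + a • xt)
    (hxplus : xplus = (1 - a) • xag + a • xtp) :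
    ∀ x ∈ X, G xplus ≤ (1 - a) * G xag + a * G x + a * ⟪G' xmd, xtp - x⟫
      + L_G * a ^ 2 / 2 * ‖xtp - xt‖ ^ 2 := by
  intro x _
  have hxmdX : xmd ∈ X := hxmd ▸ hXconv hxag hxt (by linarith) ha0 (by ring)
  have hxplusX : xplus ∈ X := hxplus ▸ hXconv hxag hxtp (by linarith) ha0 (by ring)
  have hnorm : ‖xplus - xmd‖ ^ 2 = a ^ 2 * ‖xtp - xt‖ ^ 2 := by
    have : xplus - xmd = a • (xtp - xt) := by rw [hxplus, hxmd]; module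
    rw [this, norm_smul, mul_pow, Real.norm_eq_abs, sq_abs]
  have hlin : ⟪G' xmd, xplus - xmd⟫ =
      (1 - a) * ⟪G' xmd, xag - xmd⟫ + a * ⟪G' xmd, x - xmd⟫ + a * ⟪G' xmd, xtp - x⟫ := by
    have : xplus - xmd = (1 - a) • (xag - xmd) + a • (x - xmd) + a • (xtp - x) := by
      rw [hxplus]; module
    rw [this, inner_add_right, inner_add_right, real_inner_smul_right, real_inner_smul_right,
      real_inner_smul_right]
  have hag : G xmd + ⟪G' xmd, xag - xmd⟫ ≤ G xag :=
    hGconv.add_inner_gradient_sub_le trivial trivial (hGgrad xmd)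
  have hx : G xmd + ⟪G' xmd, x - xmd⟫ ≤ G x :=
    hGconv.add_inner_gradient_sub_le trivial trivial (hGgrad xmd)
  have hdescent := hGsmooth xmd hxmdX xplus hxplusX
  rw [hnorm, hlin] at hdescent
  linarith [mul_le_mul_of_nonneg_left hag (sub_nonneg.mpr ha1), mul_le_mul_of_nonneg_left hx ha0]

theorem stmt_4
    {𝒳 : Type*}
    [NormedAddCommGroup 𝒳] [InnerProductSpace ℝ 𝒳] [FiniteDimensional ℝ 𝒳]
    (X : Set 𝒳) (hXclosed : IsClosed X) (hXconv : Convex ℝ X)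
    (G : 𝒳 → ℝ) (G' : 𝒳 → 𝒳) (hGgrad : ∀ p, HasGradientAt G (G' p) p)
    (hGconv : ConvexOn ℝ Set.univ G)
    (L_G : ℝ) (hLG : 0 < L_G)
    (hGsmooth : ∀ x₁ ∈ X, ∀ x₂ ∈ X,
      G x₂ - G x₁ - ⟪G' x₁, x₂ - x₁⟫ ≤ L_G / 2 * ‖x₂ - x₁‖ ^ 2)
    (a : ℝ) (ha0 : 0 ≤ a) (ha1 : a ≤ 1)
    (xag xt xtp : 𝒳) (hxag : xag ∈ X) (hxt : xt ∈ X) (hxtp : xtp ∈ X)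
    (xmd xplus : 𝒳)
    (hxmd : xmd = (1 - a) • xag + a • xt)
    (hxplus : xplus = (1 - a) • xag + a • xtp) :
    ∀ x ∈ X, G xplus ≤ (1 - a) * G xag + a * G x + a * ⟪G' xmd, xtp - x⟫
      + L_G * a ^ 2 / 2 * ‖xtp - xt‖ ^ 2 :=
  stmt_4_general X hXconv G G' hGgrad hGconv L_G hGsmooth a ha0 ha1 xag xt xtp hxag hxt hxtp xmd
    xplus hxmd hxplus
end

section
/- For each t ≥ 1 and every z = (w, x, y) with w ∈ 𝒲, x ∈ X, y ∈ 𝒴, the AADMM iterates satisfy Q(z; z_{t+1}^ag) − (1−α_t)Q(z; z_t^ag) ≤ α_t [ ⟨∇G(x_t^md), x_{t+1} − x⟩ + F(w_{t+1}) − F(w) + (L_G α_t/2)‖x_{t+1} − x_t‖² − ⟨y, Bw_{t+1} − Kx_{t+1} − b⟩ + ⟨y_{t+1}, Bw − Kx − b⟩ ]. -/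
/-!
Along `z_{t+1}^ag = (1 - α_t) z_t^ag + α_t z_{t+1}` the coupling terms `⟪ỹ, Bw - Kx - b⟫` of
`Q(z; ·)` split exactly, being affine in `(w, x)` and linear in `ỹ`, and the `F` term splits by
convexity. The `G` term is bounded by the smoothness inequality at `x_t^md` together with the
first-order convexity inequality at `x_t^md`, taken towards `x_t^ag` and towards `x`; since
`x_{t+1}^ag - x_t^md = α_t (x_{t+1} - x_t)`, this costs `L_G α_t² / 2 ‖x_{t+1} - x_t‖²`.
-/

open RealInnerProductSpace

section FirstOrder

variable {E : Type*} [NormedAddCommGroup E] [InnerProductSpace ℝ E] [CompleteSpace E]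
  {s : Set E} {f : E → ℝ} {g p u : E}

theorem ConvexOn.add_inner_le_of_hasGradientAt (hf : ConvexOn ℝ s f) (hg : HasGradientAt f g p)
    (hp : p ∈ s) (hu : u ∈ s) : f p + ⟪g, u - p⟫ ≤ f u := by
  let c : ℝ →ᵃ[ℝ] E := AffineMap.lineMap p u
  have hc : HasDerivAt (f ∘ c) ⟪g, u - p⟫ 0 := by
    have hf' : HasFDerivAt f (InnerProductSpace.toDual ℝ E g) (c 0) := by
      simpa [c] using hg.hasFDerivAt
    simpa using hf'.comp_hasDerivAt 0 AffineMap.hasDerivAt_lineMap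
  have hslope := (hf.comp_affineMap c).le_slope_of_hasDerivAt
    (by simpa [c] using hp) (by simpa [c] using hu) one_pos hc
  simp only [slope, Function.comp_apply, c, AffineMap.lineMap_apply_zero,
    AffineMap.lineMap_apply_one, sub_zero, inv_one, smul_eq_mul, one_mul, vsub_eq_sub] at hslope
  linarith

variable {L a : ℝ} {xmd xag xag' x x' : E}

theorem ConvexOn.le_of_accelerated_step (hf : ConvexOn ℝ s f) (hg : HasGradientAt f g xmd)
    (ha₀ : 0 ≤ a) (ha₁ : a ≤ 1)
    (hxmd : xmd = (1 - a) • xag + a • x) (hxag' : xag' = (1 - a) • xag + a • x')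
    (hxmd_mem : xmd ∈ s) (hxag : xag ∈ s) (hu : u ∈ s)
    (hsmooth : f xag' - f xmd - ⟪g, xag' - xmd⟫ ≤ L / 2 * ‖xag' - xmd‖ ^ 2) :
    f xag' ≤ (1 - a) * f xag + a * f u + a * ⟪g, x' - u⟫ + L * a ^ 2 / 2 * ‖x' - x‖ ^ 2 := by
  have hstep : xag' - xmd = a • (x' - x) := by
    rw [hxag', hxmd]; module
  have hnorm : ‖xag' - xmd‖ ^ 2 = a ^ 2 * ‖x' - x‖ ^ 2 := by
    rw [hstep, norm_smul, mul_pow, Real.norm_eq_abs, sq_abs]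
  have hlin : ⟪g, xag' - xmd⟫ - (1 - a) * ⟪g, xag - xmd⟫ - a * ⟪g, u - xmd⟫
      = a * ⟪g, x' - u⟫ := by
    simp only [← real_inner_smul_right, ← inner_sub_right]
    congr 1
    rw [hxag', hxmd]; module
  have hto_xag := mul_le_mul_of_nonneg_left
    (hf.add_inner_le_of_hasGradientAt hg hxmd_mem hxag) (sub_nonneg.2 ha₁)
  have hto_u := mul_le_mul_of_nonneg_left (hf.add_inner_le_of_hasGradientAt hg hxmd_mem hu) ha₀
  rw [hnorm] at hsmooth
  linarith

end FirstOrder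

section Gap

variable {𝒲 𝒳 𝒴 : Type*}
  [NormedAddCommGroup 𝒲] [InnerProductSpace ℝ 𝒲]
  [NormedAddCommGroup 𝒳] [InnerProductSpace ℝ 𝒳]
  [NormedAddCommGroup 𝒴] [InnerProductSpace ℝ 𝒴]

/-- The gap function `Q(z̃; z)` with `z₀ = z̃`; points are ordered as `z = (w, x, y)`. -/
def gap (G : 𝒳 → ℝ) (F : 𝒲 → ℝ) (K : 𝒳 →L[ℝ] 𝒴) (B : 𝒲 →L[ℝ] 𝒴) (b : 𝒴)
    (z₀ z : 𝒲 × 𝒳 × 𝒴) : ℝ :=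
  (G z.2.1 + F z.1 - ⟪z₀.2.2, B z.1 - K z.2.1 - b⟫)
    - (G z₀.2.1 + F z₀.1 - ⟪z.2.2, B z₀.1 - K z₀.2.1 - b⟫)

theorem inner_residual_lineMap (K : 𝒳 →L[ℝ] 𝒴) (B : 𝒲 →L[ℝ] 𝒴) (b v : 𝒴) (a : ℝ)
    (w w' : 𝒲) (x x' : 𝒳) :
    ⟪v, B ((1 - a) • w + a • w') - K ((1 - a) • x + a • x') - b⟫
      = (1 - a) * ⟪v, B w - K x - b⟫ + a * ⟪v, B w' - K x' - b⟫ := by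
  simp only [← real_inner_smul_right, ← inner_add_right, map_add, map_smul]
  congr 1
  module

theorem gap_aggregate_le [CompleteSpace 𝒳] {G : 𝒳 → ℝ} {F : 𝒲 → ℝ} {K : 𝒳 →L[ℝ] 𝒴}
    {B : 𝒲 →L[ℝ] 𝒴} {b : 𝒴} {X : Set 𝒳} {g : 𝒳} {L a : ℝ}
    (hG : ConvexOn ℝ X G) (hF : ConvexOn ℝ Set.univ F) (ha₀ : 0 ≤ a) (ha₁ : a ≤ 1)
    {xmd xag xag' x x' : 𝒳} {wag wag' w' : 𝒲} {yag yag' y' : 𝒴}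
    (hg : HasGradientAt G g xmd) (hxmd : xmd = (1 - a) • xag + a • x)
    (hxag' : xag' = (1 - a) • xag + a • x') (hwag' : wag' = (1 - a) • wag + a • w')
    (hyag' : yag' = (1 - a) • yag + a • y') (hxmd_mem : xmd ∈ X) (hxag : xag ∈ X)
    (hsmooth : G xag' - G xmd - ⟪g, xag' - xmd⟫ ≤ L / 2 * ‖xag' - xmd‖ ^ 2)
    (wv : 𝒲) {xv : 𝒳} (hxv : xv ∈ X) (yv : 𝒴) :
    gap G F K B b (wv, xv, yv) (wag', xag', yag')
      - (1 - a) * gap G F K B b (wv, xv, yv) (wag, xag, yag)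
      ≤ a * (⟪g, x' - xv⟫ + F w' - F wv + L * a / 2 * ‖x' - x‖ ^ 2
        - ⟪yv, B w' - K x' - b⟫ + ⟪y', B wv - K xv - b⟫) := by
  have hGstep := hG.le_of_accelerated_step hg ha₀ ha₁ hxmd hxag' hxmd_mem hxag hxv hsmooth
  subst hxag' hwag' hyag'
  have hFstep := hF.2 (Set.mem_univ wag) (Set.mem_univ w') (sub_nonneg.2 ha₁) ha₀
    (sub_add_cancel 1 a)
  have hcoupling := inner_residual_lineMap K B b yv a wag w' xag x'
  have hmultiplier : ⟪(1 - a) • yag + a • y', B wv - K xv - b⟫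
      = (1 - a) * ⟪yag, B wv - K xv - b⟫ + a * ⟪y', B wv - K xv - b⟫ := by
    rw [inner_add_left, real_inner_smul_left, real_inner_smul_left]
  simp only [gap, smul_eq_mul] at hFstep ⊢
  rw [hcoupling, hmultiplier]
  linarith

end Gap

theorem stmt_5_general
    {𝒲 𝒳 𝒴 : Type*}
    [NormedAddCommGroup 𝒲] [InnerProductSpace ℝ 𝒲]
    [NormedAddCommGroup 𝒳] [InnerProductSpace ℝ 𝒳] [FiniteDimensional ℝ 𝒳]
    [NormedAddCommGroup 𝒴] [InnerProductSpace ℝ 𝒴]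
    (X : Set 𝒳) (hXconv : Convex ℝ X)
    (G : 𝒳 → ℝ) (G' : 𝒳 → 𝒳) (hGgrad : ∀ p, HasGradientAt G (G' p) p)
    (hGconv : ConvexOn ℝ Set.univ G)
    (L_G : ℝ)
    (hGsmooth : ∀ x₁ ∈ X, ∀ x₂ ∈ X,
      G x₂ - G x₁ - ⟪G' x₁, x₂ - x₁⟫ ≤ L_G / 2 * ‖x₂ - x₁‖ ^ 2)
    (F : 𝒲 → ℝ) (hFconv : ConvexOn ℝ Set.univ F)
    (K : 𝒳 →L[ℝ] 𝒴) (B : 𝒲 →L[ℝ] 𝒴) (b : 𝒴)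
    (α : ℕ → ℝ)
    (hα : ∀ t, 1 ≤ t → 0 < α t ∧ α t ≤ 1)
    (x xag xmd : ℕ → 𝒳) (w wag : ℕ → 𝒲) (y yag : ℕ → 𝒴)
    (hx1 : x 1 ∈ X)
    (hxag1 : xag 1 = x 1)
    (hxmd : ∀ t, 1 ≤ t → xmd t = (1 - α t) • xag t + α t • x t)
    (hxmem : ∀ t, 1 ≤ t → x (t + 1) ∈ X)
    (hxagstep : ∀ t, 1 ≤ t → xag (t + 1) = (1 - α t) • xag t + α t • x (t + 1))
    (hwagstep : ∀ t, 1 ≤ t → wag (t + 1) = (1 - α t) • wag t + α t • w (t + 1))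
    (hyagstep : ∀ t, 1 ≤ t → yag (t + 1) = (1 - α t) • yag t + α t • y (t + 1))
    :
    ∀ t, 1 ≤ t → ∀ wv : 𝒲, ∀ xv ∈ X, ∀ yv : 𝒴,
      ((G (xag (t + 1)) + F (wag (t + 1)) - ⟪yv, B (wag (t + 1)) - K (xag (t + 1)) - b⟫)
          - (G xv + F wv - ⟪yag (t + 1), B wv - K xv - b⟫))
        - (1 - α t) * ((G (xag t) + F (wag t) - ⟪yv, B (wag t) - K (xag t) - b⟫)
          - (G xv + F wv - ⟪yag t, B wv - K xv - b⟫))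
      ≤ α t * (⟪G' (xmd t), x (t + 1) - xv⟫ + F (w (t + 1)) - F wv
          + L_G * α t / 2 * ‖x (t + 1) - x t‖ ^ 2
          - ⟪yv, B (w (t + 1)) - K (x (t + 1)) - b⟫ + ⟪y (t + 1), B wv - K xv - b⟫) := by
  have hx_mem : ∀ t, 1 ≤ t → x t ∈ X
    | 1, _ => hx1
    | t + 2, _ => hxmem (t + 1) (by omega)
  have hmix_mem : ∀ t, 1 ≤ t → xag t ∈ X → ∀ p ∈ X, (1 - α t) • xag t + α t • p ∈ X :=
    fun t ht hxag p hp ↦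
      hXconv hxag hp (sub_nonneg.2 (hα t ht).2) (hα t ht).1.le (sub_add_cancel 1 _)
  have hxag_mem : ∀ t, 1 ≤ t → xag t ∈ X := by
    intro t ht
    induction t, ht using Nat.le_induction with
    | base => exact hxag1 ▸ hx1
    | succ t ht ih => exact hxagstep t ht ▸ hmix_mem t ht ih _ (hxmem t ht)
  intro t ht wv xv hxv yv
  have hxmd_mem : xmd t ∈ X := hxmd t ht ▸ hmix_mem t ht (hxag_mem t ht) _ (hx_mem t ht)
  exact gap_aggregate_le (hGconv.subset (Set.subset_univ X) hXconv) hFconv (hα t ht).1.le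
    (hα t ht).2 (hGgrad (xmd t)) (hxmd t ht) (hxagstep t ht) (hwagstep t ht) (hyagstep t ht)
    hxmd_mem (hxag_mem t ht) (hGsmooth _ hxmd_mem _ (hxag_mem (t + 1) (by omega))) wv hxv yv

theorem stmt_5
    {𝒲 𝒳 𝒴 : Type*}
    [NormedAddCommGroup 𝒲] [InnerProductSpace ℝ 𝒲] [FiniteDimensional ℝ 𝒲]
    [NormedAddCommGroup 𝒳] [InnerProductSpace ℝ 𝒳] [FiniteDimensional ℝ 𝒳]
    [NormedAddCommGroup 𝒴] [InnerProductSpace ℝ 𝒴] [FiniteDimensional ℝ 𝒴]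
    (X : Set 𝒳) (hXclosed : IsClosed X) (hXconv : Convex ℝ X)
    (G : 𝒳 → ℝ) (G' : 𝒳 → 𝒳) (hGgrad : ∀ p, HasGradientAt G (G' p) p)
    (hGconv : ConvexOn ℝ Set.univ G)
    (L_G : ℝ) (hLG : 0 < L_G)
    (hGsmooth : ∀ x₁ ∈ X, ∀ x₂ ∈ X,
      G x₂ - G x₁ - ⟪G' x₁, x₂ - x₁⟫ ≤ L_G / 2 * ‖x₂ - x₁‖ ^ 2)
    (F : 𝒲 → ℝ) (hFconv : ConvexOn ℝ Set.univ F) (hFlsc : LowerSemicontinuous F)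
    (K : 𝒳 →L[ℝ] 𝒴) (B : 𝒲 →L[ℝ] 𝒴) (b : 𝒴)
    (χ : ℝ) (hχ : χ = 0 ∨ χ = 1)
    (α η θ τ ρ : ℕ → ℝ)
    (hα : ∀ t, 1 ≤ t → 0 < α t ∧ α t ≤ 1)
    (hη : ∀ t, 1 ≤ t → 0 < η t) (hθ : ∀ t, 1 ≤ t → 0 ≤ θ t)
    (hτ : ∀ t, 1 ≤ t → 0 < τ t) (hρ : ∀ t, 1 ≤ t → 0 < ρ t)
    (x xag xmd : ℕ → 𝒳) (w wag : ℕ → 𝒲) (y yag : ℕ → 𝒴)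
    (hx1 : x 1 ∈ X) (hw1 : B (w 1) = K (x 1) + b) (hy1 : y 1 = 0)
    (hxag1 : xag 1 = x 1) (hwag1 : wag 1 = w 1) (hyag1 : yag 1 = y 1)
    (hxmd : ∀ t, 1 ≤ t → xmd t = (1 - α t) • xag t + α t • x t)
    (hxmem : ∀ t, 1 ≤ t → x (t + 1) ∈ X)
    (hxstep : ∀ t, 1 ≤ t → ∀ u ∈ X,
      ⟪G' (xmd t), x (t + 1)⟫ - χ * θ t * ⟪B (w t) - K (x t) - b, K (x (t + 1))⟫
        + (1 - χ) * θ t / 2 * ‖B (w t) - K (x (t + 1)) - b‖ ^ 2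
        + ⟪y t, K (x (t + 1))⟫ + η t / 2 * ‖x (t + 1) - x t‖ ^ 2
      ≤ ⟪G' (xmd t), u⟫ - χ * θ t * ⟪B (w t) - K (x t) - b, K u⟫
        + (1 - χ) * θ t / 2 * ‖B (w t) - K u - b‖ ^ 2
        + ⟪y t, K u⟫ + η t / 2 * ‖u - x t‖ ^ 2)
    (hxagstep : ∀ t, 1 ≤ t → xag (t + 1) = (1 - α t) • xag t + α t • x (t + 1))
    (hwstep : ∀ t, 1 ≤ t → ∀ u : 𝒲,
      F (w (t + 1)) - ⟪y t, B (w (t + 1))⟫ + τ t / 2 * ‖B (w (t + 1)) - K (x (t + 1)) - b‖ ^ 2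
      ≤ F u - ⟪y t, B u⟫ + τ t / 2 * ‖B u - K (x (t + 1)) - b‖ ^ 2)
    (hwagstep : ∀ t, 1 ≤ t → wag (t + 1) = (1 - α t) • wag t + α t • w (t + 1))
    (hystep : ∀ t, 1 ≤ t → y (t + 1) = y t - ρ t • (B (w (t + 1)) - K (x (t + 1)) - b))
    (hyagstep : ∀ t, 1 ≤ t → yag (t + 1) = (1 - α t) • yag t + α t • y (t + 1))
    :
    ∀ t, 1 ≤ t → ∀ wv : 𝒲, ∀ xv ∈ X, ∀ yv : 𝒴,
      ((G (xag (t + 1)) + F (wag (t + 1)) - ⟪yv, B (wag (t + 1)) - K (xag (t + 1)) - b⟫)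
          - (G xv + F wv - ⟪yag (t + 1), B wv - K xv - b⟫))
        - (1 - α t) * ((G (xag t) + F (wag t) - ⟪yv, B (wag t) - K (xag t) - b⟫)
          - (G xv + F wv - ⟪yag t, B wv - K xv - b⟫))
      ≤ α t * (⟪G' (xmd t), x (t + 1) - xv⟫ + F (w (t + 1)) - F wv
          + L_G * α t / 2 * ‖x (t + 1) - x t‖ ^ 2
          - ⟪yv, B (w (t + 1)) - K (x (t + 1)) - b⟫ + ⟪y (t + 1), B wv - K xv - b⟫) :=
  stmt_5_general X hXconv G G' hGgrad hGconv L_G hGsmooth F hFconv K B b α hα x xag xmd w wag y yag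
    hx1 hxag1 hxmd hxmem hxagstep hwagstep hyagstep
end

section
/- For each t ≥ 1, set x̃_t := χx_t + (1−χ)x_{t+1}. Then for every x ∈ X, w ∈ 𝒲 and y ∈ 𝒴 the AADMM iterates satisfy ⟨∇G(x_t^md), x_{t+1} − x⟩ + F(w_{t+1}) − F(w) − ⟨y, Bw_{t+1} − Kx_{t+1} − b⟩ + ⟨y_{t+1}, Bw − Kx − b⟩ ≤ ⟨η_t(x_t − x_{t+1}), x_{t+1} − x⟩ + ⟨y_{t+1} − y, Bw_{t+1} − Kx_{t+1} − b⟩ − ⟨(θ_t/ρ_t − 1)(y_t − y_{t+1}), −K(x_{t+1} − x)⟩ − ⟨(τ_t/ρ_t − 1)(y_t − y_{t+1}), B(w_{t+1} − w)⟩ + θ_t⟨K(x_{t+1} − x̃_t), K(x_{t+1} − x)⟩ + θ_t⟨B(w_{t+1} − w_t), −K(x_{t+1} − x)⟩. -/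
/-!
Each primal update minimizes a convex function over a convex set, so it satisfies the first-order
optimality condition. For the `x`-update the objective is smooth, giving
`0 ≤ ⟪∇φ(x_{t+1}), x - x_{t+1}⟫`; for the `w`-update it is `F` plus a smooth penalty, giving
`F(w_{t+1}) - F(w) ≤ ⟪∇ψ(w_{t+1}), w - w_{t+1}⟫`. Adding the two and substituting
`y_t - y_{t+1} = ρ_t (B w_{t+1} - K x_{t+1} - b)`, the claim differs from the sum of the two
inequalities only by an identity between inner products.
-/

open RealInnerProductSpace Set

theorem IsMinOn.le_add_fderiv_of_convexOn {E : Type*} [NormedAddCommGroup E] [NormedSpace ℝ E]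
    {S : Set E} {h q : E → ℝ} {q' : E →L[ℝ] ℝ} {u v : E}
    (hmin : IsMinOn (fun z => h z + q z) S u) (hh : ConvexOn ℝ S h) (hq : HasFDerivAt q q' u)
    (hu : u ∈ S) (hv : v ∈ S) : h u ≤ h v + q' (v - u) := by
  -- Replacing `h` by its chord on `[u, v]` gives a differentiable function of one variable
  -- that is still minimal at `0` on `[0, 1]`.
  set g : ℝ → ℝ := fun l => h u + l * (h v - h u) + q (u + l • (v - u))
  have hg : HasDerivAt g (h v - h u + q' (v - u)) 0 := by
    have hline : HasDerivAt (fun l : ℝ => u + l • (v - u)) (v - u) 0 := by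
      simpa using ((hasDerivAt_id (0 : ℝ)).smul_const (v - u)).const_add u
    have hchord := ((hasDerivAt_id (0 : ℝ)).mul_const (h v - h u)).const_add (h u)
    exact (hchord.add (hq.comp_hasDerivAt_of_eq 0 hline (by simp))).congr_deriv (by simp)
  have hgmin : IsLocalMinOn g (Icc 0 1) 0 := by
    refine IsMinOn.localize <| isMinOn_iff.2 fun l hl => ?_
    have hseg : (1 - l) • u + l • v = u + l • (v - u) := by
      rw [smul_sub, sub_smul, one_smul]; abel
    have hmem := hh.1 hu hv (sub_nonneg.2 hl.2) hl.1 (sub_add_cancel 1 l)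
    have hchord := hh.2 hu hv (sub_nonneg.2 hl.2) hl.1 (sub_add_cancel 1 l)
    have hle := isMinOn_iff.1 hmin _ hmem
    rw [hseg] at hchord hle
    simp only [smul_eq_mul] at hchord
    simp only [g, zero_mul, add_zero, zero_smul]
    linarith
  have hcone : (1 : ℝ) ∈ posTangentConeAt (Icc 0 1) 0 :=
    mem_posTangentConeAt_of_segment_subset (by simp [segment_eq_Icc])
  have hderiv := hgmin.hasFDerivWithinAt_nonneg hg.hasFDerivAt.hasFDerivWithinAt hcone
  rw [ContinuousLinearMap.toSpanSingleton_apply, one_smul] at hderiv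
  linarith

theorem stmt_6_general
    {𝒲 𝒳 𝒴 : Type*}
    [NormedAddCommGroup 𝒲] [InnerProductSpace ℝ 𝒲]
    [NormedAddCommGroup 𝒳] [InnerProductSpace ℝ 𝒳]
    [NormedAddCommGroup 𝒴] [InnerProductSpace ℝ 𝒴]
    (X : Set 𝒳) (hXconv : Convex ℝ X)
    (G' : 𝒳 → 𝒳)
    (F : 𝒲 → ℝ) (hFconv : ConvexOn ℝ Set.univ F)
    (K : 𝒳 →L[ℝ] 𝒴) (B : 𝒲 →L[ℝ] 𝒴) (b : 𝒴)
    (χ : ℝ)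
    (η θ τ ρ : ℕ → ℝ)
    (hρ : ∀ t, 1 ≤ t → 0 < ρ t)
    (x xmd : ℕ → 𝒳) (w : ℕ → 𝒲) (y : ℕ → 𝒴)
    (hxmem : ∀ t, 1 ≤ t → x (t + 1) ∈ X)
    (hxstep : ∀ t, 1 ≤ t → ∀ u ∈ X,
      ⟪G' (xmd t), x (t + 1)⟫ - χ * θ t * ⟪B (w t) - K (x t) - b, K (x (t + 1))⟫
        + (1 - χ) * θ t / 2 * ‖B (w t) - K (x (t + 1)) - b‖ ^ 2
        + ⟪y t, K (x (t + 1))⟫ + η t / 2 * ‖x (t + 1) - x t‖ ^ 2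
      ≤ ⟪G' (xmd t), u⟫ - χ * θ t * ⟪B (w t) - K (x t) - b, K u⟫
        + (1 - χ) * θ t / 2 * ‖B (w t) - K u - b‖ ^ 2
        + ⟪y t, K u⟫ + η t / 2 * ‖u - x t‖ ^ 2)
    (hwstep : ∀ t, 1 ≤ t → ∀ u : 𝒲,
      F (w (t + 1)) - ⟪y t, B (w (t + 1))⟫ + τ t / 2 * ‖B (w (t + 1)) - K (x (t + 1)) - b‖ ^ 2
      ≤ F u - ⟪y t, B u⟫ + τ t / 2 * ‖B u - K (x (t + 1)) - b‖ ^ 2)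
    (hystep : ∀ t, 1 ≤ t → y (t + 1) = y t - ρ t • (B (w (t + 1)) - K (x (t + 1)) - b))
    :
    ∀ t, 1 ≤ t → ∀ wv : 𝒲, ∀ xv ∈ X, ∀ yv : 𝒴,
      ⟪G' (xmd t), x (t + 1) - xv⟫ + F (w (t + 1)) - F wv
        - ⟪yv, B (w (t + 1)) - K (x (t + 1)) - b⟫ + ⟪y (t + 1), B wv - K xv - b⟫
      ≤ ⟪η t • (x t - x (t + 1)), x (t + 1) - xv⟫
        + ⟪y (t + 1) - yv, B (w (t + 1)) - K (x (t + 1)) - b⟫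
        - ⟪(θ t / ρ t - 1) • (y t - y (t + 1)), -(K (x (t + 1)) - K xv)⟫
        - ⟪(τ t / ρ t - 1) • (y t - y (t + 1)), B (w (t + 1)) - B wv⟫
        + θ t * ⟪K (x (t + 1) - (χ • x t + (1 - χ) • x (t + 1))), K (x (t + 1)) - K xv⟫
        + θ t * ⟪B (w (t + 1)) - B (w t), -(K (x (t + 1)) - K xv)⟫ := by
  intro t ht wv xv hxv yv
  have hx_opt := IsLocalMinOn.hasFDerivWithinAt_nonneg (IsMinOn.localize (by exact hxstep t ht))
    ((((((innerSL ℝ (G' (xmd t))).hasFDerivAt.sub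
      (((innerSL ℝ (B (w t) - K (x t) - b)).comp K).hasFDerivAt.const_mul (χ * θ t))).add
      ((((hasFDerivAt_const (B (w t)) _).sub K.hasFDerivAt).sub_const b).norm_sq.const_mul
        ((1 - χ) * θ t / 2))).add ((innerSL ℝ (y t)).comp K).hasFDerivAt).add
      (((hasFDerivAt_id _).sub_const (x t)).norm_sq.const_mul (η t / 2))).hasFDerivWithinAt)
    (sub_mem_posTangentConeAt_of_segment_subset (hXconv.segment_subset (hxmem t ht) hxv))
  have hw_opt := IsMinOn.le_add_fderiv_of_convexOn (u := w (t + 1))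
    (isMinOn_iff.2 fun z _ => by
      simp only [Pi.add_apply, Pi.neg_apply, ContinuousLinearMap.comp_apply, coe_innerSL_apply]
      linarith [hwstep t ht z]) hFconv
    ((((innerSL ℝ (y t)).comp B).hasFDerivAt.neg).add
      (((B.hasFDerivAt.sub_const (K (x (t + 1)))).sub_const b).norm_sq.const_mul (τ t / 2)))
    (mem_univ _) (mem_univ wv)
  have hcoef : ∀ c : ℝ, (c / ρ t - 1) • (y t - y (t + 1))
      = (c - ρ t) • (B (w (t + 1)) - K (x (t + 1)) - b) := by
    intro c
    rw [hystep t ht, sub_sub_cancel, smul_smul, div_sub_one (hρ t ht).ne',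
      div_mul_cancel₀ _ (hρ t ht).ne']
  rw [hcoef, hcoef, hystep t ht]
  simp only [map_sub, map_add, map_smul, ContinuousLinearMap.sub_comp,
    ContinuousLinearMap.comp_neg, ContinuousLinearMap.comp_id, ContinuousLinearMap.comp_apply,
    add_apply, sub_apply, smul_apply, neg_apply, coe_innerSL_apply, Pi.sub_apply, id_eq,
    zero_sub, neg_sub, smul_eq_mul, nsmul_eq_mul, Nat.cast_ofNat, inner_add_left,
    inner_sub_left, inner_sub_right, real_inner_smul_right, real_inner_comm] at hx_opt hw_opt ⊢
  ring_nf at hx_opt hw_opt ⊢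
  linarith

theorem stmt_6
    {𝒲 𝒳 𝒴 : Type*}
    [NormedAddCommGroup 𝒲] [InnerProductSpace ℝ 𝒲] [FiniteDimensional ℝ 𝒲]
    [NormedAddCommGroup 𝒳] [InnerProductSpace ℝ 𝒳] [FiniteDimensional ℝ 𝒳]
    [NormedAddCommGroup 𝒴] [InnerProductSpace ℝ 𝒴] [FiniteDimensional ℝ 𝒴]
    (X : Set 𝒳) (hXclosed : IsClosed X) (hXconv : Convex ℝ X)
    (G : 𝒳 → ℝ) (G' : 𝒳 → 𝒳) (hGgrad : ∀ p, HasGradientAt G (G' p) p)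
    (hGconv : ConvexOn ℝ Set.univ G)
    (L_G : ℝ) (hLG : 0 < L_G)
    (hGsmooth : ∀ x₁ ∈ X, ∀ x₂ ∈ X,
      G x₂ - G x₁ - ⟪G' x₁, x₂ - x₁⟫ ≤ L_G / 2 * ‖x₂ - x₁‖ ^ 2)
    (F : 𝒲 → ℝ) (hFconv : ConvexOn ℝ Set.univ F) (hFlsc : LowerSemicontinuous F)
    (K : 𝒳 →L[ℝ] 𝒴) (B : 𝒲 →L[ℝ] 𝒴) (b : 𝒴)
    (χ : ℝ) (hχ : χ = 0 ∨ χ = 1)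
    (α η θ τ ρ : ℕ → ℝ)
    (hα : ∀ t, 1 ≤ t → 0 < α t ∧ α t ≤ 1)
    (hη : ∀ t, 1 ≤ t → 0 < η t) (hθ : ∀ t, 1 ≤ t → 0 ≤ θ t)
    (hτ : ∀ t, 1 ≤ t → 0 < τ t) (hρ : ∀ t, 1 ≤ t → 0 < ρ t)
    (x xag xmd : ℕ → 𝒳) (w wag : ℕ → 𝒲) (y yag : ℕ → 𝒴)
    (hx1 : x 1 ∈ X) (hw1 : B (w 1) = K (x 1) + b) (hy1 : y 1 = 0)
    (hxag1 : xag 1 = x 1) (hwag1 : wag 1 = w 1) (hyag1 : yag 1 = y 1)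
    (hxmd : ∀ t, 1 ≤ t → xmd t = (1 - α t) • xag t + α t • x t)
    (hxmem : ∀ t, 1 ≤ t → x (t + 1) ∈ X)
    (hxstep : ∀ t, 1 ≤ t → ∀ u ∈ X,
      ⟪G' (xmd t), x (t + 1)⟫ - χ * θ t * ⟪B (w t) - K (x t) - b, K (x (t + 1))⟫
        + (1 - χ) * θ t / 2 * ‖B (w t) - K (x (t + 1)) - b‖ ^ 2
        + ⟪y t, K (x (t + 1))⟫ + η t / 2 * ‖x (t + 1) - x t‖ ^ 2
      ≤ ⟪G' (xmd t), u⟫ - χ * θ t * ⟪B (w t) - K (x t) - b, K u⟫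
        + (1 - χ) * θ t / 2 * ‖B (w t) - K u - b‖ ^ 2
        + ⟪y t, K u⟫ + η t / 2 * ‖u - x t‖ ^ 2)
    (hxagstep : ∀ t, 1 ≤ t → xag (t + 1) = (1 - α t) • xag t + α t • x (t + 1))
    (hwstep : ∀ t, 1 ≤ t → ∀ u : 𝒲,
      F (w (t + 1)) - ⟪y t, B (w (t + 1))⟫ + τ t / 2 * ‖B (w (t + 1)) - K (x (t + 1)) - b‖ ^ 2
      ≤ F u - ⟪y t, B u⟫ + τ t / 2 * ‖B u - K (x (t + 1)) - b‖ ^ 2)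
    (hwagstep : ∀ t, 1 ≤ t → wag (t + 1) = (1 - α t) • wag t + α t • w (t + 1))
    (hystep : ∀ t, 1 ≤ t → y (t + 1) = y t - ρ t • (B (w (t + 1)) - K (x (t + 1)) - b))
    (hyagstep : ∀ t, 1 ≤ t → yag (t + 1) = (1 - α t) • yag t + α t • y (t + 1))
    :
    ∀ t, 1 ≤ t → ∀ wv : 𝒲, ∀ xv ∈ X, ∀ yv : 𝒴,
      ⟪G' (xmd t), x (t + 1) - xv⟫ + F (w (t + 1)) - F wv
        - ⟪yv, B (w (t + 1)) - K (x (t + 1)) - b⟫ + ⟪y (t + 1), B wv - K xv - b⟫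
      ≤ ⟪η t • (x t - x (t + 1)), x (t + 1) - xv⟫
        + ⟪y (t + 1) - yv, B (w (t + 1)) - K (x (t + 1)) - b⟫
        - ⟪(θ t / ρ t - 1) • (y t - y (t + 1)), -(K (x (t + 1)) - K xv)⟫
        - ⟪(τ t / ρ t - 1) • (y t - y (t + 1)), B (w (t + 1)) - B wv⟫
        + θ t * ⟪K (x (t + 1) - (χ • x t + (1 - χ) • x (t + 1))), K (x (t + 1)) - K xv⟫
        + θ t * ⟪B (w (t + 1)) - B (w t), -(K (x (t + 1)) - K xv)⟫ :=
  stmt_6_general X hXconv G' F hFconv K B b χ η θ τ ρ hρ x xmd w y hxmem hxstep hwstep hystep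
end

section
/- Let (α_i)_{i=1}^t ⊂ (0,1], let (Γ_i)_{i=1}^t be positive reals, (γ_i)_{i=1}^t nonnegative reals, let S ⊆ V be a bounded set with diameter D_S := sup_{s₁,s₂∈S}‖s₁ − s₂‖, let v ∈ S and let (v_i)_{i=1}^{t+1} be a sequence contained in S. If the sequence (α_iγ_i/Γ_i)_{i=1}^t is nondecreasing, then 𝓑_t(v, v_{[t+1]}, γ_{[t]}) ≤ (α_tγ_t/(2Γ_t))D_S² − (α_tγ_t/(2Γ_t))‖v_{t+1} − v‖². -/
open RealInnerProductSpace

/-! Summing by parts, `∑ cᵢ (aᵢ - aᵢ₊₁) = c₁ a₁ + ∑_{i ≥ 2} (cᵢ - cᵢ₋₁) aᵢ - c_t a_{t+1}`. For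
nonnegative nondecreasing weights `cᵢ = αᵢγᵢ/(2Γᵢ)` every coefficient of `aᵢ = ‖vᵢ - v‖²` with
`i ≤ t` is nonnegative and they add up to `c_t`, so bounding each such `aᵢ` by `D_S²` gives the claim. -/

theorem sum_Icc_mul_sub_succ_le {c a : ℕ → ℝ} {M : ℝ} (t : ℕ) (ht : 1 ≤ t) (hc : 0 ≤ c 1)
    (hmono : ∀ i, 1 ≤ i → i + 1 ≤ t → c i ≤ c (i + 1)) (ha : ∀ i, 1 ≤ i → i ≤ t → a i ≤ M) :
    ∑ i ∈ Finset.Icc 1 t, c i * (a i - a (i + 1)) ≤ c t * M - c t * a (t + 1) := by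
  induction t, ht using Nat.le_induction with
  | base =>
    simp only [Finset.Icc_self, Finset.sum_singleton]
    linarith [mul_le_mul_of_nonneg_left (ha 1 le_rfl le_rfl) hc]
  | succ n hn ih =>
    have ih := ih (fun i h1 h2 => hmono i h1 (by omega)) (fun i h1 h2 => ha i h1 (by omega))
    have hstep : (c (n + 1) - c n) * a (n + 1) ≤ (c (n + 1) - c n) * M :=
      mul_le_mul_of_nonneg_left (ha (n + 1) (by omega) le_rfl) (sub_nonneg.2 (hmono n hn le_rfl))
    rw [Finset.sum_Icc_succ_top (by omega)]
    linarith

theorem stmt_9_general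
    {V : Type*} [NormedAddCommGroup V] [InnerProductSpace ℝ V]
    (t : ℕ) (ht : 1 ≤ t)
    (α Γ γ : ℕ → ℝ)
    (hα : ∀ i, 1 ≤ i → i ≤ t → 0 < α i ∧ α i ≤ 1)
    (hΓ : ∀ i, 1 ≤ i → i ≤ t → 0 < Γ i)
    (hγ : ∀ i, 1 ≤ i → i ≤ t → 0 ≤ γ i)
    (hinc : ∀ i, 1 ≤ i → i + 1 ≤ t → α i * γ i / Γ i ≤ α (i + 1) * γ (i + 1) / Γ (i + 1))
    (S : Set V) (hS : Bornology.IsBounded S)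
    (v : V) (hv : v ∈ S) (vs : ℕ → V) (hvs : ∀ i, 1 ≤ i → i ≤ t + 1 → vs i ∈ S) :
    ∑ i ∈ Finset.Icc 1 t, α i * γ i / (2 * Γ i) * (‖vs i - v‖ ^ 2 - ‖vs (i + 1) - v‖ ^ 2)
      ≤ α t * γ t / (2 * Γ t) * Metric.diam S ^ 2
        - α t * γ t / (2 * Γ t) * ‖vs (t + 1) - v‖ ^ 2 := by
  have halve : ∀ i, α i * γ i / (2 * Γ i) = α i * γ i / Γ i / 2 := fun i => by
    rw [div_div, mul_comm 2]
  refine sum_Icc_mul_sub_succ_le t ht ?_ ?_ ?_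
  · have hΓ1 := hΓ 1 le_rfl ht
    exact div_nonneg (mul_nonneg (hα 1 le_rfl ht).1.le (hγ 1 le_rfl ht)) (by positivity)
  · intro i h1 h2
    rw [halve, halve]
    linarith [hinc i h1 h2]
  · intro i h1 h2
    rw [← dist_eq_norm]
    exact pow_le_pow_left₀ dist_nonneg (Metric.dist_le_diam_of_mem hS (hvs i h1 (by omega)) hv) 2

theorem stmt_9
    {V : Type*} [NormedAddCommGroup V] [InnerProductSpace ℝ V] [FiniteDimensional ℝ V]
    (t : ℕ) (ht : 1 ≤ t)
    (α Γ γ : ℕ → ℝ)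
    (hα : ∀ i, 1 ≤ i → i ≤ t → 0 < α i ∧ α i ≤ 1)
    (hΓ : ∀ i, 1 ≤ i → i ≤ t → 0 < Γ i)
    (hγ : ∀ i, 1 ≤ i → i ≤ t → 0 ≤ γ i)
    (hinc : ∀ i, 1 ≤ i → i + 1 ≤ t → α i * γ i / Γ i ≤ α (i + 1) * γ (i + 1) / Γ (i + 1))
    (S : Set V) (hS : Bornology.IsBounded S)
    (v : V) (hv : v ∈ S) (vs : ℕ → V) (hvs : ∀ i, 1 ≤ i → i ≤ t + 1 → vs i ∈ S) :
    ∑ i ∈ Finset.Icc 1 t, α i * γ i / (2 * Γ i) * (‖vs i - v‖ ^ 2 - ‖vs (i + 1) - v‖ ^ 2)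
      ≤ α t * γ t / (2 * Γ t) * Metric.diam S ^ 2
        - α t * γ t / (2 * Γ t) * ‖vs (t + 1) - v‖ ^ 2 :=
  stmt_9_general t ht α Γ γ hα hΓ hγ hinc S hS v hv vs hvs
end

section
/- Let L_min > 0 and L_G > 0 with L_min ≤ 2L_G. Suppose the sequences (α_t)_{t≥1} ⊂ (0,1], (Γ_t)_{t≥0} of positive reals and (L_t)_{t≥1} satisfy: Γ_0 ≥ L_min; for all t ≥ 1, Γ_t = (1−α_t)Γ_{t−1}, L_tα_t² = Γ_t, and L_min ≤ L_t ≤ 2L_G. Then for every t ≥ 1, L_min/(t+1)² ≤ Γ_t ≤ 8L_G/t². -/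
/-!
Since `Γ_{t-1} = Γ_t / (1 - α_t)` and `α_t = √(Γ_t / L_t)`, we get
`1/Γ_t - 1/Γ_{t-1} = α_t/Γ_t = 1/(√L_t √Γ_t)`. Dividing by `1/√Γ_t + 1/√Γ_{t-1}`, which lies
between `1/√Γ_t` and `2/√Γ_t` because `Γ` is nonincreasing, shows that each increment of
`1/√Γ_t` lies in `[1/(2√L_t), 1/√L_t] ⊆ [1/(2√(2 L_G)), 1/√L_min]`. Summing the increments
and using `1/√Γ_0 ≤ 1/√L_min` gives both bounds.
-/

open RealInnerProductSpace

open Real Set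

lemma sub_mem_Icc_of_sq_sub_sq_eq_mul {x y k : ℝ} (hx : 0 < x) (hxy : x ≤ y)
    (h : y ^ 2 - x ^ 2 = y * k) : y - x ∈ Icc (k / 2) k := by
  have hfac : (y - x) * (y + x) = y * k := by rw [← h]; ring
  constructor <;> nlinarith

lemma inv_sqrt_sub_inv_sqrt_mem_Icc {α Γ Γ' L : ℝ} (hα : 0 < α) (hΓ : 0 < Γ) (hΓ' : 0 < Γ')
    (hrec : Γ = (1 - α) * Γ') (hL : L * α ^ 2 = Γ) :
    1 / √Γ - 1 / √Γ' ∈ Icc (1 / √L / 2) (1 / √L) := by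
  have hLpos : 0 < L := pos_of_mul_pos_left (hL ▸ hΓ) (sq_nonneg α)
  have hsqrt : √Γ = √L * α := by rw [← hL, sqrt_mul hLpos.le, sqrt_sq hα.le]
  refine sub_mem_Icc_of_sq_sub_sq_eq_mul (by positivity) ?_ ?_
  · gcongr
    nlinarith
  · rw [div_pow, div_pow, one_pow, sq_sqrt hΓ.le, sq_sqrt hΓ'.le, hsqrt]
    rw [← hL] at hrec ⊢
    field_simp
    rw [sq_sqrt hLpos.le]
    linear_combination (-L) * hrec

lemma add_mul_le_of_le_sub_succ {u : ℕ → ℝ} {a : ℝ} (h : ∀ n, a ≤ u (n + 1) - u n) (n : ℕ) :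
    u 0 + n * a ≤ u n := by
  induction n with
  | zero => simp
  | succ n ih => push_cast; linarith [h n]

lemma le_add_mul_of_sub_succ_le {u : ℕ → ℝ} {b : ℝ} (h : ∀ n, u (n + 1) - u n ≤ b) (n : ℕ) :
    u n ≤ u 0 + n * b := by
  induction n with
  | zero => simp
  | succ n ih => push_cast; linarith [h n]

lemma div_sq_le_of_one_div_sqrt_le {Γ L c : ℝ} (hΓ : 0 < Γ) (hL : 0 < L) (hc : 0 < c)
    (h : 1 / √Γ ≤ c / √L) : L / c ^ 2 ≤ Γ := by
  rw [div_le_div_iff₀ (by positivity) (by positivity), one_mul] at h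
  rw [div_le_iff₀ (by positivity)]
  calc L = √L ^ 2 := (sq_sqrt hL.le).symm
    _ ≤ (c * √Γ) ^ 2 := by gcongr
    _ = Γ * c ^ 2 := by rw [mul_pow, sq_sqrt hΓ.le, mul_comm]

lemma le_div_sq_of_div_sqrt_le {Γ L c : ℝ} (hΓ : 0 < Γ) (hL : 0 < L) (hc : 0 < c)
    (h : c / √L ≤ 1 / √Γ) : Γ ≤ L / c ^ 2 := by
  rw [div_le_div_iff₀ (by positivity) (by positivity), one_mul] at h
  rw [le_div_iff₀ (by positivity)]
  calc Γ * c ^ 2 = (c * √Γ) ^ 2 := by rw [mul_pow, sq_sqrt hΓ.le, mul_comm]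
    _ ≤ √L ^ 2 := by gcongr
    _ = L := sq_sqrt hL.le

theorem stmt_15_general
    (L_min L_G : ℝ) (hLmin : 0 < L_min) (hLG : 0 < L_G)
    (α Γ L : ℕ → ℝ)
    (hΓpos : ∀ t, 0 < Γ t)
    (hΓ0 : L_min ≤ Γ 0)
    (hα : ∀ t, 1 ≤ t → 0 < α t ∧ α t ≤ 1)
    (hΓrec : ∀ t, 1 ≤ t → Γ t = (1 - α t) * Γ (t - 1))
    (hL : ∀ t, 1 ≤ t → L t * α t ^ 2 = Γ t)
    (hLbd : ∀ t, 1 ≤ t → L_min ≤ L t ∧ L t ≤ 2 * L_G) :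
    ∀ t : ℕ, 1 ≤ t → L_min / ((t : ℝ) + 1) ^ 2 ≤ Γ t ∧ Γ t ≤ 8 * L_G / (t : ℝ) ^ 2 := by
  set u : ℕ → ℝ := fun t => 1 / √(Γ t)
  have hstep n : u (n + 1) - u n ∈ Icc (1 / √(L (n + 1)) / 2) (1 / √(L (n + 1))) :=
    inv_sqrt_sub_inv_sqrt_mem_Icc (hα _ le_add_self).1 (hΓpos _) (hΓpos _)
      (hΓrec _ le_add_self) (hL _ le_add_self)
  have hinc_ge n : 1 / √(2 * L_G) / 2 ≤ u (n + 1) - u n := by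
    refine le_trans ?_ (hstep n).1
    have := hLmin.trans_le (hLbd (n + 1) le_add_self).1
    gcongr
    exact (hLbd _ le_add_self).2
  have hinc_le n : u (n + 1) - u n ≤ 1 / √L_min := by
    refine (hstep n).2.trans ?_
    gcongr
    exact (hLbd _ le_add_self).1
  intro t ht
  constructor
  · refine div_sq_le_of_one_div_sqrt_le (hΓpos t) hLmin (by positivity) ?_
    calc u t ≤ u 0 + t * (1 / √L_min) := le_add_mul_of_sub_succ_le hinc_le t
      _ ≤ 1 / √L_min + t * (1 / √L_min) := by
          gcongr
          exact one_div_le_one_div_of_le (sqrt_pos.2 hLmin) (sqrt_le_sqrt hΓ0)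
      _ = (t + 1) / √L_min := by ring
  · have htpos : (0 : ℝ) < t := by exact_mod_cast ht
    calc Γ t ≤ 2 * L_G / (t / 2) ^ 2 := by
          refine le_div_sq_of_div_sqrt_le (hΓpos t) (by positivity) (by positivity) ?_
          have hu0 : 0 ≤ u 0 := by positivity
          calc (t : ℝ) / 2 / √(2 * L_G) = t * (1 / √(2 * L_G) / 2) := by ring
            _ ≤ u 0 + t * (1 / √(2 * L_G) / 2) := by linarith
            _ ≤ u t := add_mul_le_of_le_sub_succ hinc_ge t
      _ = 8 * L_G / t ^ 2 := by field_simp; ring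

theorem stmt_15
    (L_min L_G : ℝ) (hLmin : 0 < L_min) (hLG : 0 < L_G) (hle : L_min ≤ 2 * L_G)
    (α Γ L : ℕ → ℝ)
    (hΓpos : ∀ t, 0 < Γ t)
    (hΓ0 : L_min ≤ Γ 0)
    (hα : ∀ t, 1 ≤ t → 0 < α t ∧ α t ≤ 1)
    (hΓrec : ∀ t, 1 ≤ t → Γ t = (1 - α t) * Γ (t - 1))
    (hL : ∀ t, 1 ≤ t → L t * α t ^ 2 = Γ t)
    (hLbd : ∀ t, 1 ≤ t → L_min ≤ L t ∧ L t ≤ 2 * L_G) :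
    ∀ t : ℕ, 1 ≤ t → L_min / ((t : ℝ) + 1) ^ 2 ≤ Γ t ∧ Γ t ≤ 8 * L_G / (t : ℝ) ^ 2 :=
  stmt_15_general L_min L_G hLmin hLG α Γ L hΓpos hΓ0 hα hΓrec hL hLbd
end

section
/- Let ρ > 0, y_t ∈ 𝒲 and u ∈ 𝒲. Suppose w⁺ is a minimizer over 𝒲 of w ↦ F(w) − ⟨y_t, w⟩ + (ρ/2)‖w − u‖², and set y⁺ := y_t − ρ(w⁺ − u). Then y⁺ is a minimizer over 𝒲 of y ↦ F*(y) + (1/(2ρ))‖y − (y_t + ρu)‖², where F*(y) := sup_{w∈𝒲}(⟨y, w⟩ − F(w)) ∈ ℝ ∪ {+∞}; in particular F*(y⁺) < ∞, i.e. y⁺ ∈ dom F*. -/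
/-! The optimality condition of the proximal step says exactly that `y⁺` is a subgradient of `F`
at `w⁺`. Hence the supremum defining `F*(y⁺)` is attained at `w⁺`, so it is finite, and since
`y_t + ρu = y⁺ + ρw⁺`, the Fenchel–Young inequality `F*(y) ≥ ⟪y, w⁺⟫ - F(w⁺)` reduces the
minimality of `y⁺` to that of `y ↦ ⟪y, w⁺⟫ + ‖y - (y⁺ + ρw⁺)‖² / (2ρ)`, a completed square. -/

open RealInnerProductSpace Set Filter Topology

section FirstOrder

variable {E : Type*} [NormedAddCommGroup E] [NormedSpace ℝ E]

lemma ConvexOn.sub_le_of_forall_add_le_of_hasFDerivAt {f g : E → ℝ} {g' : E →L[ℝ] ℝ} {w : E}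
    (hf : ConvexOn ℝ univ f) (hg : HasFDerivAt g g' w) (hmin : ∀ v, f w + g w ≤ f v + g v)
    (v : E) : f w - g' (v - w) ≤ f v := by
  have hslope := ((hg.hasLineDerivAt (v - w)).tendsto_slope_zero_right).const_add (f v - f w)
  have hquot : ∀ t ∈ Ioc (0 : ℝ) 1, 0 ≤ f v - f w + t⁻¹ • (g (w + t • (v - w)) - g w) := by
    rintro t ⟨ht0, ht1⟩
    have hchord : f (w + t • (v - w)) ≤ (1 - t) * f w + t * f v := by
      have hseg : (1 - t) • w + t • v = w + t • (v - w) := by module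
      simpa only [hseg, smul_eq_mul] using
        hf.2 (mem_univ w) (mem_univ v) (sub_nonneg.2 ht1) ht0.le (sub_add_cancel 1 t)
    have hle := hmin (w + t • (v - w))
    rw [smul_eq_mul, ← mul_le_mul_iff_of_pos_left ht0, mul_zero, mul_add,
      mul_inv_cancel_left₀ ht0.ne']
    linarith
  have hlim : 0 ≤ f v - f w + g' (v - w) :=
    ge_of_tendsto hslope (mem_of_superset (Ioc_mem_nhdsGT one_pos) hquot)
  linarith

end FirstOrder

section InnerProduct

variable {E : Type*} [NormedAddCommGroup E] [InnerProductSpace ℝ E]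

lemma hasFDerivAt_neg_inner_add_mul_norm_sub_sq (y u w : E) (ρ : ℝ) :
    HasFDerivAt (fun x => -⟪y, x⟫ + ρ / 2 * ‖x - u‖ ^ 2) (innerSL ℝ (ρ • (w - u) - y)) w := by
  refine ((innerSL ℝ y).hasFDerivAt.neg.add
    (((hasFDerivAt_id w).sub_const u).norm_sq.const_mul (ρ / 2))).congr_fderiv ?_
  ext d
  simp only [id_eq, map_sub, ContinuousLinearMap.comp_id, add_apply, neg_apply, coe_innerSL_apply,
    smul_apply, sub_apply, nsmul_eq_mul, Nat.cast_ofNat, smul_eq_mul, map_smul]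
  ring

lemma ConvexOn.add_inner_le_of_forall_sub_inner_add_sq_le {F : E → ℝ} {y u w : E} {ρ : ℝ}
    (hF : ConvexOn ℝ univ F)
    (hmin : ∀ v, F w - ⟪y, w⟫ + ρ / 2 * ‖w - u‖ ^ 2 ≤ F v - ⟪y, v⟫ + ρ / 2 * ‖v - u‖ ^ 2)
    (v : E) : F w + ⟪y - ρ • (w - u), v - w⟫ ≤ F v := by
  have h := hF.sub_le_of_forall_add_le_of_hasFDerivAt
    (hasFDerivAt_neg_inner_add_mul_norm_sub_sq y u w ρ) (fun v => by linarith [hmin v]) v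
  rw [innerSL_apply_apply, ← neg_sub y, inner_neg_left] at h
  linarith

noncomputable def fenchelConjugate (F : E → ℝ) (y : E) : EReal :=
  ⨆ w, ((⟪y, w⟫ - F w : ℝ) : EReal)

lemma inner_sub_le_fenchelConjugate (F : E → ℝ) (y w : E) :
    ((⟪y, w⟫ - F w : ℝ) : EReal) ≤ fenchelConjugate F y :=
  le_iSup (fun w => ((⟪y, w⟫ - F w : ℝ) : EReal)) w

lemma fenchelConjugate_eq_of_forall_add_inner_le {F : E → ℝ} {y w : E}
    (hsub : ∀ v, F w + ⟪y, v - w⟫ ≤ F v) :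
    fenchelConjugate F y = ((⟪y, w⟫ - F w : ℝ) : EReal) :=
  (iSup_le fun v => EReal.coe_le_coe_iff.2 <| by
    linarith [hsub v, inner_sub_right (𝕜 := ℝ) y v w]).antisymm
    (inner_sub_le_fenchelConjugate F y w)

lemma inner_add_one_div_mul_norm_sub_sq_le {ρ : ℝ} (hρ : 0 < ρ) (y y' w : E) :
    ⟪y, w⟫ + 1 / (2 * ρ) * ‖y - (y + ρ • w)‖ ^ 2
      ≤ ⟪y', w⟫ + 1 / (2 * ρ) * ‖y' - (y + ρ • w)‖ ^ 2 := by
  have hy : ‖y - (y + ρ • w)‖ ^ 2 = ρ ^ 2 * ‖w‖ ^ 2 := by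
    rw [sub_add_cancel_left, norm_neg, norm_smul, mul_pow, Real.norm_eq_abs, sq_abs]
  have hy' : ‖y' - (y + ρ • w)‖ ^ 2 = ‖y' - y‖ ^ 2 - 2 * ρ * ⟪y' - y, w⟫ + ρ ^ 2 * ‖w‖ ^ 2 := by
    rw [← sub_sub, norm_sub_sq_real, real_inner_smul_right, norm_smul, mul_pow, Real.norm_eq_abs,
      sq_abs]
    ring
  have hinner : ⟪y', w⟫ = ⟪y, w⟫ + ⟪y' - y, w⟫ := by rw [inner_sub_left]; ring
  rw [hy, hy', hinner]
  field_simp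
  linarith [sq_nonneg ‖y' - y‖]

lemma fenchelConjugate_add_le_of_forall_add_inner_le {F : E → ℝ} {y w : E}
    (hsub : ∀ v, F w + ⟪y, v - w⟫ ≤ F v) {ρ : ℝ} (hρ : 0 < ρ) (y' : E) :
    fenchelConjugate F y + ((1 / (2 * ρ) * ‖y - (y + ρ • w)‖ ^ 2 : ℝ) : EReal)
      ≤ fenchelConjugate F y' + ((1 / (2 * ρ) * ‖y' - (y + ρ • w)‖ ^ 2 : ℝ) : EReal) :=
  calc fenchelConjugate F y + ((1 / (2 * ρ) * ‖y - (y + ρ • w)‖ ^ 2 : ℝ) : EReal)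
      = ((⟪y, w⟫ - F w + 1 / (2 * ρ) * ‖y - (y + ρ • w)‖ ^ 2 : ℝ) : EReal) := by
        rw [fenchelConjugate_eq_of_forall_add_inner_le hsub, EReal.coe_add]
    _ ≤ ((⟪y', w⟫ - F w + 1 / (2 * ρ) * ‖y' - (y + ρ • w)‖ ^ 2 : ℝ) : EReal) :=
        EReal.coe_le_coe_iff.2 <| by linarith [inner_add_one_div_mul_norm_sub_sq_le hρ y y' w]
    _ ≤ fenchelConjugate F y' + ((1 / (2 * ρ) * ‖y' - (y + ρ • w)‖ ^ 2 : ℝ) : EReal) := by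
        rw [EReal.coe_add]
        gcongr
        exact inner_sub_le_fenchelConjugate F y' w

end InnerProduct

theorem stmt_16_general
    {𝒲 : Type*} [NormedAddCommGroup 𝒲] [InnerProductSpace ℝ 𝒲]
    (F : 𝒲 → ℝ) (hFconv : ConvexOn ℝ Set.univ F)
    (ρv : ℝ) (hρv : 0 < ρv) (yt u wplus : 𝒲)
    (hmin : ∀ wv : 𝒲, F wplus - ⟪yt, wplus⟫ + ρv / 2 * ‖wplus - u‖ ^ 2
      ≤ F wv - ⟪yt, wv⟫ + ρv / 2 * ‖wv - u‖ ^ 2)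
    (yplus : 𝒲) (hyplus : yplus = yt - ρv • (wplus - u)) :
    (∀ yv : 𝒲,
      (⨆ wv : 𝒲, ((⟪yplus, wv⟫ - F wv : ℝ) : EReal))
          + ((1 / (2 * ρv) * ‖yplus - (yt + ρv • u)‖ ^ 2 : ℝ) : EReal)
        ≤ (⨆ wv : 𝒲, ((⟪yv, wv⟫ - F wv : ℝ) : EReal))
          + ((1 / (2 * ρv) * ‖yv - (yt + ρv • u)‖ ^ 2 : ℝ) : EReal)) ∧
    (⨆ wv : 𝒲, ((⟪yplus, wv⟫ - F wv : ℝ) : EReal)) < ⊤ := by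
  have hsub : ∀ v, F wplus + ⟪yplus, v - wplus⟫ ≤ F v :=
    hyplus ▸ hFconv.add_inner_le_of_forall_sub_inner_add_sq_le hmin
  have hcenter : yt + ρv • u = yplus + ρv • wplus := by
    rw [hyplus]
    module
  refine ⟨fun yv => ?_, ?_⟩
  · rw [hcenter]
    exact fenchelConjugate_add_le_of_forall_add_inner_le hsub hρv yv
  · change fenchelConjugate F yplus < ⊤
    rw [fenchelConjugate_eq_of_forall_add_inner_le hsub]
    exact EReal.coe_lt_top _

theorem stmt_16
    {𝒲 : Type*} [NormedAddCommGroup 𝒲] [InnerProductSpace ℝ 𝒲] [FiniteDimensional ℝ 𝒲]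
    (F : 𝒲 → ℝ) (hFconv : ConvexOn ℝ Set.univ F) (hFlsc : LowerSemicontinuous F)
    (ρv : ℝ) (hρv : 0 < ρv) (yt u wplus : 𝒲)
    (hmin : ∀ wv : 𝒲, F wplus - ⟪yt, wplus⟫ + ρv / 2 * ‖wplus - u‖ ^ 2
      ≤ F wv - ⟪yt, wv⟫ + ρv / 2 * ‖wv - u‖ ^ 2)
    (yplus : 𝒲) (hyplus : yplus = yt - ρv • (wplus - u)) :
    (∀ yv : 𝒲,
      (⨆ wv : 𝒲, ((⟪yplus, wv⟫ - F wv : ℝ) : EReal))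
          + ((1 / (2 * ρv) * ‖yplus - (yt + ρv • u)‖ ^ 2 : ℝ) : EReal)
        ≤ (⨆ wv : 𝒲, ((⟪yv, wv⟫ - F wv : ℝ) : EReal))
          + ((1 / (2 * ρv) * ‖yv - (yt + ρv • u)‖ ^ 2 : ℝ) : EReal)) ∧
    (⨆ wv : 𝒲, ((⟪yplus, wv⟫ - F wv : ℝ) : EReal)) < ⊤ :=
  stmt_16_general F hFconv ρv hρv yt u wplus hmin yplus hyplus
end
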